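/- arXiv:2006.03665 — 2 statements merged into one kernel-verified Lean document; each statement's English description precedes it below -/
import Mathlib

section
/- For all octonions a, b, c, the identity Re(b·((conj(a)·a)·c)) = Re((b·conj(a))·(a·c)) holds, where Re denotes the real part. -/
noncomputable section

/-- Octonions as the Cayley–Dickson double of the quaternions. -/
abbrev O := Quaternion ℝ × Quaternion ℝ

/-- Cayley–Dickson multiplication: (a,b)·(c,d) = (ac − d·conj(b), conj(a)·d + c·b). -/
def omul (x y : O) : O := (x.1 * y.1 - y.2 * star x.2, star x.1 * y.2 + y.1 * x.2)

/-- Octonionic conjugation: conj (a,b) = (conj a, −b). -/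
def oconj (x : O) : O := (star x.1, -x.2)

/-- The unit 1 = (1,0). -/
def oone : O := (1, 0)

/-- Euclidean norm: |(a,b)| = sqrt(|a|² + |b|²). -/
def onorm (x : O) : ℝ := Real.sqrt (‖x.1‖^2 + ‖x.2‖^2)

/-- The real part of an octonion (a,b) is the real part of a. -/
def oRe (x : O) : ℝ := x.1.re

/-!
The real part is associative on octonions, `Re((xy)z) = Re(x(yz))`, so both sides can be
rebracketed as `Re(w c)`, with `w = b(āa)` on the left and `w = (bā)a` on the right. Both of these
equal `|a|² b`: `āa = |a|²` is real, and in `(bā)a` the cross terms of the Cayley–Dickson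
product cancel.
-/

open Quaternion

theorem sq_onorm (x : O) : onorm x ^ 2 = normSq x.1 + normSq x.2 := by
  rw [onorm, Real.sq_sqrt (by positivity), normSq_eq_norm_mul_self, normSq_eq_norm_mul_self, sq, sq]

theorem omul_smul_oone (x : O) (r : ℝ) : omul x (r • oone) = r • x := by
  ext : 1 <;> simp [omul, oone]

theorem oconj_omul_self (a : O) : omul (oconj a) a = onorm a ^ 2 • oone := by
  ext : 1 <;> simp [omul, oconj, oone, sq_onorm, star_mul_self, self_mul_star, Algebra.smul_def]

theorem omul_oconj_omul (x a : O) : omul (omul x (oconj a)) a = onorm a ^ 2 • x := by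
  rcases x with ⟨x1, x2⟩
  rcases a with ⟨a1, a2⟩
  ext : 1 <;>
  simp only [omul, oconj, sq_onorm, star_add, star_sub, star_mul, star_neg, star_star, mul_add,
    sub_mul, mul_neg, neg_mul, mul_assoc] <;>
  simp only [← mul_assoc, star_mul_self, self_mul_star, mul_coe_eq_smul, coe_mul_eq_smul,
    add_smul, Prod.fst_add, Prod.snd_add, Prod.smul_fst, Prod.smul_snd] <;>
  abel

theorem oRe_omul_assoc (x y z : O) : oRe (omul (omul x y) z) = oRe (omul x (omul y z)) := by
  simp only [omul, oRe, re_sub, re_add, re_mul, imI_mul, imJ_mul, imK_mul, re_star, imI_star,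
    imJ_star, imK_star, imI_sub, imJ_sub, imK_sub, imI_add, imJ_add, imK_add]
  ring

/-- Re(b·((conj a·a)·c)) = Re((b·conj a)·(a·c)). -/
theorem octonion_re_identity :
    ∀ a b c : O, oRe (omul b (omul (omul (oconj a) a) c)) = oRe (omul (omul b (oconj a)) (omul a c)) := by
  intro a b c
  calc oRe (omul b (omul (omul (oconj a) a) c))
      = oRe (omul (omul b (omul (oconj a) a)) c) := (oRe_omul_assoc _ _ _).symm
    _ = oRe (omul (omul (omul b (oconj a)) a) c) := by
      rw [oconj_omul_self, omul_smul_oone, omul_oconj_omul]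
    _ = oRe (omul (omul b (oconj a)) (omul a c)) := oRe_omul_assoc _ _ _
end
end

section
/- The octonionic function f(z) = x₁ − x₂·e₄ (where z = x₀ + Σ x_i e_i) satisfies the left octonionic Cauchy–Riemann equation D f = ∂f/∂x₀ + Σ_{i=1}^7 e_i·(∂f/∂x_i) = 0, but the function g(z) = f(z)·e₃ satisfies D g = 2e₅ ≠ 0. Hence left octonion-monogenic functions do not form a right O-module. -/
noncomputable section

def qi : Quaternion ℝ := ⟨0,1,0,0⟩
def qj : Quaternion ℝ := ⟨0,0,1,0⟩

/-- The standard octonion basis 1, e₁, …, e₇ with e₁ = (i,0), e₂ = (j,0), e₃ = (0,1),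
    e₄ = e₁e₂, e₅ = e₁e₃, e₆ = e₂e₃, e₇ = (e₁e₂)e₃. -/
def basis8 : Fin 8 → O := ![oone, (qi,0), (qj,0), ((0:Quaternion ℝ),1),
  omul (qi,0) (qj,0), omul (qi,0) (0,1), omul (qj,0) (0,1), omul (omul (qi,0) (qj,0)) (0,1)]

/-- The real coordinates x₀,…,x₇ of z = x₀ + Σ xᵢeᵢ with respect to `basis8`. -/
def coord : Fin 8 → O → ℝ :=
  ![fun z => z.1.re, fun z => z.1.imI, fun z => z.1.imJ, fun z => z.2.re,
    fun z => z.1.imK, fun z => -z.2.imI, fun z => -z.2.imJ, fun z => -z.2.imK]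

/-- Left octonionic Cauchy–Riemann operator D f = ∂f/∂x₀ + Σᵢ eᵢ·(∂f/∂xᵢ). -/
def Dleft (f : O → O) (z : O) : O :=
  fderiv ℝ f z (basis8 0) + ∑ i : Fin 7, omul (basis8 i.succ) (fderiv ℝ f z (basis8 i.succ))

/-- Right octonionic Cauchy–Riemann operator f D = ∂f/∂x₀ + Σᵢ (∂f/∂xᵢ)·eᵢ. -/
def Dright (f : O → O) (z : O) : O :=
  fderiv ℝ f z (basis8 0) + ∑ i : Fin 7, omul (fderiv ℝ f z (basis8 i.succ)) (basis8 i.succ)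

/-- Fueter polynomials Zᵢ(z) = xᵢ − x₀eᵢ. -/
def Zp (i : Fin 8) (z : O) : O := coord i z • oone - coord 0 z • basis8 i

/-!
The operator `D` of a real-linear function is read off from its values on the basis, and the
coordinates are dual to the basis, so `D (xᵢ a - xⱼ b) = eᵢ a - eⱼ b`. Hence `D f = e₁ - e₂e₄ = 0`,
while `g = x₁ e₃ - x₂ (e₄e₃)` gives `D g = e₁e₃ - e₂(e₄e₃) = 2e₅`: associativity would turn this
into `(e₁ - e₂e₄)e₃ = 0`, and it is the failure `e₂(e₄e₃) = -(e₂e₄)e₃` that makes `D g ≠ 0`.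
-/

open Quaternion

lemma oone_omul (x : O) : omul oone x = x := by
  simp [omul, oone]

lemma omul_oone (x : O) : omul x oone = x := by
  simp [omul, oone]

lemma sub_omul (x y z : O) : omul (x - y) z = omul x z - omul y z := by
  ext : 1 <;> simp only [omul, Prod.fst_sub, Prod.snd_sub, star_sub, mul_sub, sub_mul] <;> abel

lemma smul_omul (c : ℝ) (x y : O) : omul (c • x) y = c • omul x y := by
  simp [omul, smul_sub, smul_add]

lemma omul_sub (x y z : O) : omul x (y - z) = omul x y - omul x z := by
  ext : 1 <;> simp only [omul, Prod.fst_sub, Prod.snd_sub, mul_sub, sub_mul] <;> abel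

lemma omul_smul (c : ℝ) (x y : O) : omul x (c • y) = c • omul x y := by
  simp [omul, smul_sub, smul_add]

-- Unfolding `qi`, `qj` instead would leave bare `QuaternionAlgebra` terms, on which the scoped
-- `Quaternion` simp lemmas do not fire.
@[simp] lemma qi_re : qi.re = 0 := rfl
@[simp] lemma qi_imI : qi.imI = 1 := rfl
@[simp] lemma qi_imJ : qi.imJ = 0 := rfl
@[simp] lemma qi_imK : qi.imK = 0 := rfl
@[simp] lemma qj_re : qj.re = 0 := rfl
@[simp] lemma qj_imI : qj.imI = 0 := rfl
@[simp] lemma qj_imJ : qj.imJ = 1 := rfl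
@[simp] lemma qj_imK : qj.imK = 0 := rfl

lemma coord_basis8 (i j : Fin 8) : coord i (basis8 j) = if i = j then 1 else 0 := by
  fin_cases i <;> fin_cases j <;> simp [coord, basis8, omul, oone]

lemma omul_basis8_one_three : omul (basis8 1) (basis8 3) = basis8 5 := rfl

lemma omul_basis8_four_three : omul (basis8 4) (basis8 3) = basis8 7 := rfl

lemma omul_basis8_two_four : omul (basis8 2) (basis8 4) = basis8 1 := by
  ext <;> simp [basis8, omul]

lemma omul_basis8_two_seven : omul (basis8 2) (basis8 7) = -basis8 5 := by
  ext <;> simp [basis8, omul]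

lemma two_smul_basis8_five_ne_zero : (2 : ℝ) • basis8 5 ≠ 0 := by
  intro h
  simpa [basis8, omul] using congrArg (fun x : O => x.2.imI) h

lemma Dleft_eq_sum (f : O → O) (z : O) :
    Dleft f z = ∑ j : Fin 8, omul (basis8 j) (fderiv ℝ f z (basis8 j)) := by
  rw [Fin.sum_univ_succ, show basis8 0 = oone from rfl, oone_omul]
  rfl

lemma Dleft_sub {f g : O → O} {z : O} (hf : DifferentiableAt ℝ f z)
    (hg : DifferentiableAt ℝ g z) :
    Dleft (fun w => f w - g w) z = Dleft f z - Dleft g z := by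
  simp [Dleft_eq_sum, fderiv_fun_sub hf hg, omul_sub]

lemma isLinearMap_coord (i : Fin 8) : IsLinearMap ℝ (coord i) := by
  fin_cases i <;> constructor <;> intros <;> simp [coord] <;> ring

def coordCLM (i : Fin 8) : O →L[ℝ] ℝ :=
  (IsLinearMap.mk' (coord i) (isLinearMap_coord i)).toContinuousLinearMap

lemma hasFDerivAt_coord_smul (i : Fin 8) (a z : O) :
    HasFDerivAt (fun w => coord i w • a) ((coordCLM i).smulRight a) z :=
  ((coordCLM i).smulRight a).hasFDerivAt

lemma Dleft_coord_smul (i : Fin 8) (a z : O) :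
    Dleft (fun w => coord i w • a) z = omul (basis8 i) a := by
  simp only [Dleft_eq_sum, (hasFDerivAt_coord_smul i a z).fderiv,
    ContinuousLinearMap.smulRight_apply, coordCLM, LinearMap.coe_toContinuousLinearMap',
    IsLinearMap.mk'_apply, omul_smul]
  simp [coord_basis8]

lemma Dleft_coord_smul_sub_coord_smul (i j : Fin 8) (a b z : O) :
    Dleft (fun w => coord i w • a - coord j w • b) z = omul (basis8 i) a - omul (basis8 j) b := by
  rw [Dleft_sub (hasFDerivAt_coord_smul i a z).differentiableAt
    (hasFDerivAt_coord_smul j b z).differentiableAt, Dleft_coord_smul, Dleft_coord_smul]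

/-- f(z) = x₁ − x₂e₄ is left monogenic but g = f·e₃ is not: D g = 2e₅ ≠ 0.
    Hence left octonion-monogenic functions do not form a right O-module. -/
theorem left_monogenic_not_right_module :
    (∀ z : O, Dleft (fun w => coord 1 w • oone - coord 2 w • basis8 4) z = 0) ∧
    (∀ z : O, Dleft (fun w => omul (coord 1 w • oone - coord 2 w • basis8 4) (basis8 3)) z
        = (2:ℝ) • basis8 5) ∧
    ((2:ℝ) • basis8 5 ≠ (0 : O)) ∧
    ¬ (∀ h : O → O, (∀ z : O, Dleft h z = 0) →
        ∀ z : O, Dleft (fun w => omul (h w) (basis8 3)) z = 0) := by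
  have hf (z : O) : Dleft (fun w => coord 1 w • oone - coord 2 w • basis8 4) z = 0 := by
    rw [Dleft_coord_smul_sub_coord_smul, omul_oone, omul_basis8_two_four, sub_self]
  have hg (z : O) :
      Dleft (fun w => omul (coord 1 w • oone - coord 2 w • basis8 4) (basis8 3)) z
        = (2:ℝ) • basis8 5 := by
    simp_rw [sub_omul, smul_omul, oone_omul, omul_basis8_four_three]
    rw [Dleft_coord_smul_sub_coord_smul, omul_basis8_one_three, omul_basis8_two_seven,
      sub_neg_eq_add, two_smul]
  exact ⟨hf, hg, two_smul_basis8_five_ne_zero,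
    fun hmodule => two_smul_basis8_five_ne_zero (hg 0 ▸ hmodule _ hf 0)⟩
end
end
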